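/- In the multi-target detection model with well-separated signals, i.e. s_k − s_{k−1} ≥ 2L−1 for all k, the deterministic identity a³_{s∗x}[l₁, l₂] = ρ₀ a_x³[l₁, l₂] holds for all 0 ≤ l₁ ≤ l₂ ≤ L−1. -/

import Mathlib

/-!
Well-separated copies of `x` have disjoint supports even after a shift by less than `L`, so in
the product `(s∗x)[i] (s∗x)[i+l₁] (s∗x)[i+l₂]` every cross term between different copies
vanishes. What remains is a sum over the `M` copies, each of which lies inside `[0, N)` and
contributes the full sum `Σ_j x[j] x[j+l₁] x[j+l₂] = L a_x³[l₁,l₂]`.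
-/

/-- The sequence `z` of length `m`, zero-padded to all of `ℤ`. -/
noncomputable def zpad (m : ℕ) (z : ℕ → ℝ) : ℤ → ℝ :=
  fun i => if 0 ≤ i ∧ i < (m : ℤ) then z i.toNat else 0

/-- Third-order autocorrelation of the length-`m` sequence `z` with integer shifts `l₁, l₂`:
`a_z³[l₁,l₂] = (1/m) Σ_{i=0}^{m−1} z[i] z[i+l₁] z[i+l₂]`, with `z` extended by zero. -/
noncomputable def acorr3 (m : ℕ) (z : ℕ → ℝ) (l₁ l₂ : ℤ) : ℝ :=
  (1 / (m : ℝ)) * ∑ i ∈ Finset.range m, zpad m z i * zpad m z (i + l₁) * zpad m z (i + l₂)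

/-- The (zero-padded) linear convolution `s∗x` of the binary sequence `s` with the signal `x`
of length `L`, where `s` has `M` nonzero entries at the positions `p 0 < p 1 < ⋯ < p (M−1)`:
`(s∗x)[i] = Σ_k x[i − p k]`, with `x` extended by zero. -/
noncomputable def sconv (L M : ℕ) (x : ℕ → ℝ) (p : Fin M → ℕ) : ℤ → ℝ :=
  fun i => ∑ k : Fin M, zpad L x (i - (p k : ℤ))

theorem Finset.sum_mul_sum_of_mul_eq_zero {ι R : Type*} [NonUnitalNonAssocSemiring R]
    (s : Finset ι) (f g : ι → R) (h : ∀ i ∈ s, ∀ j ∈ s, i ≠ j → f i * g j = 0) :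
    (∑ i ∈ s, f i) * ∑ j ∈ s, g j = ∑ i ∈ s, f i * g i := by
  rw [Finset.sum_mul_sum]
  exact Finset.sum_congr rfl fun i hi =>
    Finset.sum_eq_single_of_mem i hi fun j hj hji => h i hi j hj hji.symm

lemma nonneg_and_lt_of_zpad_ne_zero {m : ℕ} {z : ℕ → ℝ} {t : ℤ} (h : zpad m z t ≠ 0) :
    0 ≤ t ∧ t < m := by
  by_contra hc
  exact h (if_neg hc)

lemma sum_range_comp_sub_eq_sum_range {A : Type*} [AddCommMonoid A] {L N q : ℕ} (F : ℤ → A)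
    (hF : ∀ t, F t ≠ 0 → 0 ≤ t ∧ t < L) (hq : q + L ≤ N) :
    ∑ i ∈ Finset.range N, F (i - q) = ∑ j ∈ Finset.range L, F j := by
  have hsub : Finset.Ico q (q + L) ⊆ Finset.range N := fun i hi => by
    simp only [Finset.mem_Ico] at hi
    simp only [Finset.mem_range]
    omega
  rw [← Finset.sum_subset hsub, Finset.sum_Ico_eq_sum_range, Nat.add_sub_cancel_left]
  · push_cast
    simp only [add_sub_cancel_left]
  · intro i _ hi
    by_contra hFi
    have := hF _ hFi
    simp only [Finset.mem_Ico] at hi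
    omega

section Separation

variable {M d : ℕ} {p : Fin M → ℕ}
  (hsep : ∀ k : ℕ, ∀ hk : k + 1 < M, p ⟨k, Nat.lt_of_succ_lt hk⟩ + d ≤ p ⟨k + 1, hk⟩)
include hsep

lemma add_le_of_lt_of_add_le_succ {a b : Fin M} (hab : a < b) : p a + d ≤ p b := by
  obtain ⟨a, ha⟩ := a
  obtain ⟨b, hb⟩ := b
  change a + 1 ≤ b at hab
  induction b, hab using Nat.le_induction with
  | base => exact hsep a hb
  | succ b _ ih => exact (ih (by omega)).trans ((Nat.le_add_right _ _).trans (hsep b hb))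

lemma pairwise_add_le_or_add_le :
    Pairwise fun k k' : Fin M => p k + d ≤ p k' ∨ p k' + d ≤ p k := fun _ _ h =>
  h.lt_or_gt.imp (add_le_of_lt_of_add_le_succ hsep) (add_le_of_lt_of_add_le_succ hsep)

end Separation

lemma zpad_sub_mul_zpad_sub_add_eq_zero {L l q q' : ℕ} (x : ℕ → ℝ) (i : ℤ) (hl : l < L)
    (hqq' : q + (2 * L - 1) ≤ q' ∨ q' + (2 * L - 1) ≤ q) :
    zpad L x (i - q) * zpad L x (i - q' + l) = 0 := by
  by_contra h
  have h₁ := nonneg_and_lt_of_zpad_ne_zero (left_ne_zero_of_mul h)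
  have h₂ := nonneg_and_lt_of_zpad_ne_zero (right_ne_zero_of_mul h)
  omega

lemma sconv_mul_sconv_mul_sconv {L M : ℕ} {x : ℕ → ℝ} {p : Fin M → ℕ}
    (hsep : Pairwise fun k k' : Fin M => p k + (2 * L - 1) ≤ p k' ∨ p k' + (2 * L - 1) ≤ p k)
    {l₁ l₂ : ℕ} (hl₁ : l₁ < L) (hl₂ : l₂ < L) (i : ℤ) :
    sconv L M x p i * sconv L M x p (i + l₁) * sconv L M x p (i + l₂) =
      ∑ k : Fin M, zpad L x (i - p k) * zpad L x (i - p k + l₁) * zpad L x (i - p k + l₂) := by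
  have cross {l : ℕ} (hl : l < L) (k k' : Fin M) (hkk' : k ≠ k') :
      zpad L x (i - p k) * zpad L x (i - p k' + l) = 0 :=
    zpad_sub_mul_zpad_sub_add_eq_zero x i hl (hsep hkk')
  simp only [sconv, ← sub_add_eq_add_sub]
  rw [Finset.sum_mul_sum_of_mul_eq_zero _ _ _ fun k _ k' _ h => cross hl₁ k k' h,
    Finset.sum_mul_sum_of_mul_eq_zero _ _ _ fun k _ k' _ h => by
      rw [mul_right_comm, cross hl₂ k k' h, zero_mul]]

/-- Multi-target detection with well-separated signals (consecutive occurrences separated by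
at least `2L−1` positions): the deterministic identity `a³_{s∗x}[l₁,l₂] = ρ₀ a_x³[l₁,l₂]`
holds for all `0 ≤ l₁ ≤ l₂ ≤ L−1`, where `ρ₀ = ML/N` and
`a³_{s∗x}[l₁,l₂] = (1/N) Σ_{i<N} (s∗x)[i] (s∗x)[i+l₁] (s∗x)[i+l₂]`. -/
theorem mtd_third_order_well_separated
    (L N M : ℕ)
    (x : ℕ → ℝ) (p : Fin M → ℕ)
    (hsep : ∀ k : ℕ, ∀ hk : k + 1 < M, p ⟨k, by omega⟩ + (2 * L - 1) ≤ p ⟨k + 1, hk⟩)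
    (hin : ∀ k : Fin M, p k + L ≤ N)
    (l₁ l₂ : ℕ) (hl₁₂ : l₁ ≤ l₂) (hl₂ : l₂ < L) :
    (1 / (N : ℝ)) *
        ∑ i ∈ Finset.range N, sconv L M x p i * sconv L M x p (i + l₁) * sconv L M x p (i + l₂)
      = ((M : ℝ) * L / N) * acorr3 L x l₁ l₂ := by
  have hsum : ∑ i ∈ Finset.range N,
      sconv L M x p i * sconv L M x p (i + l₁) * sconv L M x p (i + l₂)
        = M * ∑ j ∈ Finset.range L, zpad L x j * zpad L x (j + l₁) * zpad L x (j + l₂) := by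
    have hl₁ : l₁ < L := hl₁₂.trans_lt hl₂
    simp only [sconv_mul_sconv_mul_sconv (pairwise_add_le_or_add_le hsep) hl₁ hl₂]
    rw [Finset.sum_comm]
    simp only [sum_range_comp_sub_eq_sum_range
      (fun t => zpad L x t * zpad L x (t + l₁) * zpad L x (t + l₂))
      (fun t ht => nonneg_and_lt_of_zpad_ne_zero (left_ne_zero_of_mul (left_ne_zero_of_mul ht)))
      (hin _)]
    rw [Finset.sum_const, Finset.card_univ, Fintype.card_fin, nsmul_eq_mul]
  have hL : (L : ℝ) ≠ 0 := by norm_cast; omega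
  rw [hsum, acorr3]
  field_simp
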